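/- arXiv:math/0608140 — 2 statements merged into one kernel-verified Lean document; each statement's English description precedes it below -/
import Mathlib

section
/- For every dimension d ≥ 1, the sequence β_1(T^(d)[n])/n^d converges to 2^(2−d)·3^(−1) = 4/(3·2^d) as n → ∞; that is, the 1-dependent limiting density τ_1^(d) for d-dimensional toroidal kings graphs equals 2^(2−d)/3. -/
open Filter Topology

/-- The `d`-dimensional kings graph on `Fin (n 0) × ⋯ × Fin (n (d-1))`:
distinct vertices are adjacent iff their coordinates differ by at most 1. -/
def kingsGraph (d : ℕ) (n : Fin d → ℕ) :
    SimpleGraph (∀ i : Fin d, Fin (n i)) where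
  Adj u v := u ≠ v ∧ ∀ i, |((v i : ℤ)) - (u i : ℤ)| ≤ 1
  symm := by
    constructor
    rintro u v ⟨h1, h2⟩
    exact ⟨h1.symm, fun i => by rw [abs_sub_comm]; exact h2 i⟩
  loopless := by constructor; intro v h; exact h.1 rfl

/-- The `d`-dimensional toroidal kings graph on `ZMod (n 0) × ⋯ × ZMod (n (d-1))`:
distinct vertices are adjacent iff each coordinate difference is `-1`, `0` or `1`. -/
def torusGraph (d : ℕ) (n : Fin d → ℕ) :
    SimpleGraph (∀ i : Fin d, ZMod (n i)) where
  Adj u v := u ≠ v ∧ ∀ i, v i - u i = -1 ∨ v i - u i = 0 ∨ v i - u i = 1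
  symm := by
    constructor
    rintro u v ⟨h1, h2⟩
    refine ⟨h1.symm, fun i => ?_⟩
    rcases h2 i with h | h | h
    · right; right; rw [show u i - v i = -(v i - u i) by ring, h]; norm_num
    · right; left; rw [show u i - v i = -(v i - u i) by ring, h]; norm_num
    · left; rw [show u i - v i = -(v i - u i) by ring, h]
  loopless := by constructor; intro v h; exact h.1 rfl

/-- A set `S` of vertices is `k`-dependent if every vertex of `S`
has at most `k` neighbors in `S`. -/
def IsKDependent {V : Type*} (G : SimpleGraph V) (k : ℕ) (S : Set V) : Prop :=
  ∀ v ∈ S, (S ∩ G.neighborSet v).ncard ≤ k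

/-- `betaK G k` is the maximum cardinality of a `k`-dependent set in `G`. -/
noncomputable def betaK {V : Type*} (G : SimpleGraph V) (k : ℕ) : ℕ :=
  sSup {m | ∃ S : Set V, IsKDependent G k S ∧ S.ncard = m}

/-- A set `S` of vertices is half-dependent if every vertex `v ∈ S`
has at most `|N(v)|/2` neighbors in `S`. -/
def IsHalfDependent {V : Type*} (G : SimpleGraph V) (S : Set V) : Prop :=
  ∀ v ∈ S, 2 * (S ∩ G.neighborSet v).ncard ≤ (G.neighborSet v).ncard

/-- `halfNum G` is the maximum cardinality of a half-dependent set in `G`. -/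
noncomputable def halfNum {V : Type*} (G : SimpleGraph V) : ℕ :=
  sSup {m | ∃ S : Set V, IsHalfDependent G S ∧ S.ncard = m}

/-- A graph is vertex-transitive if any vertex can be mapped to any other
by a graph automorphism. -/
def IsVertexTransitive {V : Type*} (G : SimpleGraph V) : Prop :=
  ∀ u v : V, ∃ f : G ≃g G, f u = v

/-!
Upper bound: the translates `t + {0,1}^d` of the unit box are cliques of the torus; every vertex
lies in `2^d` of them and every edge in at most `2^(d-1)`. A 1-dependent set `S` meets a box in
`c ≤ 2` points, so `2c ≤ 2 + c(c-1)`. Summed over the `∏ nᵢ` boxes, `∑ c = 2^d |S|`, while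
`∑ c(c-1)` counts pairs (ordered edge of `S`, box containing it), of which there are at most
`2^(d-1) |S|` since every vertex of `S` has at most one neighbour in `S`. Hence
`3 · 2^d |S| ≤ 4 ∏ nᵢ`.

Lower bound: with `q = ⌊(n-1)/6⌋`, take the residues `0, 1 (mod 3)` below `6q` in the first
coordinate and the even residues below `6q` in the others. As `6q < n` nothing wraps around, so a
point of this product has at most one neighbour in it, its partner in the first coordinate. It has
`4q (3q)^(d-1) = (4/3) (3q)^d` points, and `3q/n → 1/2`.
-/

open Finset

theorem Finset.sum_card_inter_eq_sum_card_filter_mem {α ι : Type*} [DecidableEq α] [Fintype ι]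
    (S : Finset α) (B : ι → Finset α) :
    ∑ i, #(S ∩ B i) = ∑ v ∈ S, #{i | v ∈ B i} := by
  have := sum_card_bipartiteAbove_eq_sum_card_bipartiteBelow (fun v i => v ∈ B i) (s := S)
    (t := univ)
  simp only [bipartiteAbove, bipartiteBelow, filter_mem_eq_inter] at this
  simpa only [inter_comm] using this.symm

namespace SimpleGraph

variable {V : Type*} (G : SimpleGraph V)

theorem isKDependent_coe_iff [DecidableEq V] [DecidableRel G.Adj] {k : ℕ} (S : Finset V) :
    IsKDependent G k S ↔ ∀ v ∈ S, #{u ∈ S | G.Adj v u} ≤ k := by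
  refine forall₂_congr fun v _ => ?_
  rw [← Set.ncard_coe_finset, coe_filter]
  rfl

theorem card_le_betaK [Finite V] {k : ℕ} {S : Finset V} (hS : IsKDependent G k S) :
    #S ≤ betaK G k :=
  le_csSup ⟨Nat.card V, by rintro _ ⟨T, -, rfl⟩; exact T.ncard_le_card⟩
    ⟨S, hS, Set.ncard_coe_finset S⟩

theorem exists_card_eq_betaK [Finite V] (k : ℕ) :
    ∃ S : Finset V, IsKDependent G k S ∧ #S = betaK G k := by
  obtain ⟨S, hS, hcard⟩ := Nat.sSup_mem (s := {m | ∃ S : Set V, IsKDependent G k S ∧ S.ncard = m})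
    ⟨0, ∅, fun v hv => hv.elim, Set.ncard_empty V⟩
    ⟨Nat.card V, by rintro _ ⟨T, -, rfl⟩; exact T.ncard_le_card⟩
  refine ⟨S.toFinite.toFinset, by rwa [S.toFinite.coe_toFinset], ?_⟩
  rw [← Set.ncard_eq_toFinset_card S, hcard, betaK]

variable [DecidableEq V] [DecidableRel G.Adj]

theorem card_inter_le_two_of_isClique {S X : Finset V} (hS : IsKDependent G 1 S)
    (hX : G.IsClique (X : Set V)) : #(S ∩ X) ≤ 2 := by
  by_contra! h
  obtain ⟨u, hu⟩ : (S ∩ X).Nonempty := card_pos.mp (by omega)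
  obtain ⟨a, ha, b, hb, hab⟩ := one_lt_card.mp (by rw [card_erase_of_mem hu]; omega :
    1 < #((S ∩ X).erase u))
  rw [mem_erase, mem_inter] at ha hb
  rw [mem_inter] at hu
  have h2 : 1 < #{w ∈ S | G.Adj u w} :=
    one_lt_card.mpr ⟨a, mem_filter.mpr ⟨ha.2.1, hX hu.2 ha.2.2 ha.1.symm⟩,
      b, mem_filter.mpr ⟨hb.2.1, hX hu.2 hb.2.2 hb.1.symm⟩, hab⟩
  exact absurd ((G.isKDependent_coe_iff S).mp hS u hu.1) (by omega)

theorem card_adj_pairs_le_card {S : Finset V} (hS : IsKDependent G 1 S) :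
    #{p ∈ S ×ˢ S | G.Adj p.1 p.2} ≤ #S := by
  rw [card_filter, sum_product]
  calc ∑ u ∈ S, ∑ v ∈ S, (if G.Adj u v then 1 else 0)
      = ∑ u ∈ S, #{v ∈ S | G.Adj u v} := by simp only [card_filter]
    _ ≤ ∑ _u ∈ S, 1 := sum_le_sum ((G.isKDependent_coe_iff S).mp hS)
    _ = #S := by rw [sum_const, smul_eq_mul, mul_one]

theorem card_inter_mul_pred_of_isClique (S : Finset V) {X : Finset V}
    (hX : G.IsClique (X : Set V)) :
    #(S ∩ X) * (#(S ∩ X) - 1) = #({p ∈ S ×ˢ S | G.Adj p.1 p.2} ∩ X ×ˢ X) := by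
  rw [Nat.mul_sub_one, ← offDiag_card]
  congr 1
  ext ⟨u, v⟩
  simp only [mem_offDiag, mem_inter, mem_filter, mem_product]
  constructor
  · rintro ⟨hu, hv, huv⟩
    exact ⟨⟨⟨hu.1, hv.1⟩, hX hu.2 hv.2 huv⟩, hu.2, hv.2⟩
  · rintro ⟨⟨⟨hu, hv⟩, hadj⟩, hu', hv'⟩
    exact ⟨⟨hu, hu'⟩, ⟨hv, hv'⟩, hadj.ne⟩

theorem three_mul_mul_card_le_of_isClique_cover {ι : Type*} [Fintype ι] (B : ι → Finset V)
    (hB : ∀ i, G.IsClique (B i : Set V)) {r : ℕ} (hr : ∀ v, #{i | v ∈ B i} = r)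
    (hr' : ∀ u v, G.Adj u v → 2 * #{i | u ∈ B i ∧ v ∈ B i} ≤ r) {S : Finset V}
    (hS : IsKDependent G 1 S) :
    3 * r * #S ≤ 4 * Fintype.card ι := by
  set c : ι → ℕ := fun i => #(S ∩ B i)
  set E := {p ∈ S ×ˢ S | G.Adj p.1 p.2}
  have hsum : ∑ i, c i = r * #S := by
    rw [sum_card_inter_eq_sum_card_filter_mem, sum_congr rfl fun v _ => hr v, sum_const,
      smul_eq_mul, mul_comm]
  have hpairs : 2 * ∑ i, c i * (c i - 1) ≤ r * #S :=
    calc 2 * ∑ i, c i * (c i - 1) = 2 * ∑ i, #(E ∩ B i ×ˢ B i) := by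
          rw [sum_congr rfl fun i _ => G.card_inter_mul_pred_of_isClique S (hB i)]
      _ = ∑ p ∈ E, 2 * #{i | p ∈ B i ×ˢ B i} := by
          rw [sum_card_inter_eq_sum_card_filter_mem E, mul_sum]
      _ ≤ ∑ _p ∈ E, r := sum_le_sum fun p hp => by
          simpa only [mem_product] using hr' _ _ (mem_filter.mp hp).2
      _ = r * #E := by rw [sum_const, smul_eq_mul, mul_comm]
      _ ≤ r * #S := Nat.mul_le_mul_left _ (G.card_adj_pairs_le_card hS)
  have hpoint : ∀ i, 2 * c i ≤ 2 + c i * (c i - 1) := fun i => by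
    have : c i ≤ 2 := G.card_inter_le_two_of_isClique hS (hB i)
    interval_cases c i <;> norm_num
  have hcount : 2 * (r * #S) ≤ 2 * Fintype.card ι + ∑ i, c i * (c i - 1) :=
    calc 2 * (r * #S) = ∑ i, 2 * c i := by rw [← mul_sum, hsum]
      _ ≤ ∑ i, (2 + c i * (c i - 1)) := sum_le_sum fun i _ => hpoint i
      _ = 2 * Fintype.card ι + ∑ i, c i * (c i - 1) := by
        rw [sum_add_distrib, sum_const, card_univ, smul_eq_mul, mul_comm]
  linarith

end SimpleGraph

namespace ZMod

theorem natCast_ne_zero_of_pos_of_lt {m k : ℕ} (hk : 0 < k) (hkm : k < m) : (k : ZMod m) ≠ 0 := by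
  rw [Ne, natCast_eq_zero_iff]
  exact Nat.not_dvd_of_pos_of_lt hk hkm

theorem card_pair_sub_one {m : ℕ} (hm : 2 ≤ m) (a : ZMod m) : #{a, a - 1} = 2 := by
  have h1 : (1 : ZMod m) ≠ 0 := by exact_mod_cast natCast_ne_zero_of_pos_of_lt one_pos hm
  exact card_pair fun h => h1 (by linear_combination h)

theorem card_pair_sub_one_inter_le_one {m : ℕ} (hm : 3 ≤ m) {a b : ZMod m} (hab : a ≠ b) :
    #({a, a - 1} ∩ {b, b - 1}) ≤ 1 := by
  have h1 : (1 : ZMod m) ≠ 0 := by exact_mod_cast natCast_ne_zero_of_pos_of_lt one_pos (by omega)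
  have h2 : (2 : ZMod m) ≠ 0 := by exact_mod_cast natCast_ne_zero_of_pos_of_lt two_pos hm
  rw [card_le_one]
  simp only [mem_inter, mem_insert, mem_singleton]
  grind

-- Adjacency in `torusGraph` is, by definition, `u ≠ v ∧ ∀ i, WithinOne (u i) (v i)`.
def WithinOne {m : ℕ} (x y : ZMod m) : Prop := y - x = -1 ∨ y - x = 0 ∨ y - x = 1

theorem eq_of_natCast_eq {m a b : ℕ} (ha : a < m) (hb : b < m) (h : (a : ZMod m) = b) :
    a = b := by
  simpa only [val_natCast_of_lt ha, val_natCast_of_lt hb] using congrArg val h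

theorem card_image_natCast {m : ℕ} {s : Finset ℕ} (hs : ∀ a ∈ s, a < m) :
    #(s.image (Nat.cast : ℕ → ZMod m)) = #s :=
  card_image_of_injOn fun a ha b hb h => eq_of_natCast_eq (hs a ha) (hs b hb) h

theorem withinOne_natCast {m a b : ℕ} (ha : a + 1 < m) (hb : b + 1 < m)
    (h : WithinOne (a : ZMod m) b) : b = a + 1 ∨ b = a ∨ a = b + 1 := by
  rcases h with h | h | h
  · right; right
    exact eq_of_natCast_eq (m := m) (by omega) (by omega) (by push_cast; linear_combination -h)
  · right; left
    exact eq_of_natCast_eq (m := m) (by omega) (by omega) (by linear_combination h)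
  · left
    exact eq_of_natCast_eq (m := m) (by omega) (by omega) (by push_cast; linear_combination h)

end ZMod

open ZMod

section Torus

variable {d : ℕ} {n : Fin d → ℕ}

def unitBox (t : ∀ i, ZMod (n i)) : Finset (∀ i, ZMod (n i)) :=
  Fintype.piFinset fun i => {t i, t i + 1}

theorem mem_unitBox {t v : ∀ i, ZMod (n i)} :
    v ∈ unitBox t ↔ ∀ i, v i = t i ∨ v i = t i + 1 := by
  simp only [unitBox, Fintype.mem_piFinset, mem_insert, mem_singleton]

theorem isClique_unitBox (t : ∀ i, ZMod (n i)) :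
    (torusGraph d n).IsClique (unitBox t : Set (∀ i, ZMod (n i))) := by
  intro u hu v hv huv
  rw [mem_coe, mem_unitBox] at hu hv
  refine ⟨huv, fun i => ?_⟩
  rcases hu i with h | h <;> rcases hv i with h' | h' <;> simp [h, h']

theorem mem_unitBox_iff_mem_piFinset {t v : ∀ i, ZMod (n i)} :
    v ∈ unitBox t ↔ t ∈ Fintype.piFinset fun i => {v i, v i - 1} := by
  simp only [mem_unitBox, Fintype.mem_piFinset, mem_insert, mem_singleton]
  refine forall_congr' fun i => ?_
  constructor <;> rintro (h | h) <;> first | (left; exact h.symm) | (right; rw [h]; ring)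

section

variable [∀ i, NeZero (n i)]

theorem filter_mem_unitBox (v : ∀ i, ZMod (n i)) :
    ({t | v ∈ unitBox t} : Finset _) = Fintype.piFinset fun i => {v i, v i - 1} := by
  ext t
  rw [mem_filter, mem_unitBox_iff_mem_piFinset, and_iff_right (mem_univ t)]

theorem card_filter_mem_unitBox (hn : ∀ i, 2 ≤ n i) (v : ∀ i, ZMod (n i)) :
    #{t | v ∈ unitBox t} = 2 ^ d := by
  rw [filter_mem_unitBox, Fintype.card_piFinset, prod_congr rfl fun i _ =>
    ZMod.card_pair_sub_one (hn i) (v i), Fin.prod_const]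

theorem two_mul_card_filter_mem_unitBox_le (hn : ∀ i, 3 ≤ n i) {u v : ∀ i, ZMod (n i)}
    (huv : u ≠ v) : 2 * #{t | u ∈ unitBox t ∧ v ∈ unitBox t} ≤ 2 ^ d := by
  obtain ⟨i₀, hi₀⟩ := Function.ne_iff.mp huv
  have hpair : ({t | u ∈ unitBox t ∧ v ∈ unitBox t} : Finset _)
      = Fintype.piFinset fun i => {u i, u i - 1} ∩ {v i, v i - 1} := by
    ext t
    simp only [mem_filter, mem_univ, true_and, mem_unitBox_iff_mem_piFinset, Fintype.mem_piFinset,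
      mem_inter, forall_and]
  set s : ∀ i, Finset (ZMod (n i)) := fun i => {u i, u i - 1} ∩ {v i, v i - 1}
  have hle : ∀ i, #(s i) ≤ 2 := fun i =>
    (card_le_card inter_subset_left).trans (ZMod.card_pair_sub_one (by linarith [hn i]) (u i)).le
  calc 2 * #{t | u ∈ unitBox t ∧ v ∈ unitBox t}
      = 2 * (#(s i₀) * ∏ i ∈ univ.erase i₀, #(s i)) := by
        rw [hpair, Fintype.card_piFinset, ← mul_prod_erase univ _ (mem_univ i₀)]
    _ ≤ 2 * (1 * ∏ _i ∈ univ.erase i₀, 2) := by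
        gcongr with i
        · exact ZMod.card_pair_sub_one_inter_le_one (hn i₀) hi₀
        · exact hle i
    _ = 2 ^ d := by
        rw [one_mul, mul_prod_erase _ (fun _ => 2) (mem_univ i₀), Fin.prod_const]

end

theorem three_mul_two_pow_mul_betaK_torusGraph_le (hn : ∀ i, 3 ≤ n i) :
    3 * 2 ^ d * betaK (torusGraph d n) 1 ≤ 4 * ∏ i, n i := by
  classical
  have : ∀ i, NeZero (n i) := fun i => ⟨by linarith [hn i]⟩
  obtain ⟨S, hS, hcard⟩ := (torusGraph d n).exists_card_eq_betaK 1
  have hV : Fintype.card (∀ i, ZMod (n i)) = ∏ i, n i := by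
    simp only [Fintype.card_pi, ZMod.card]
  rw [← hcard, ← hV]
  exact (torusGraph d n).three_mul_mul_card_le_of_isClique_cover unitBox isClique_unitBox
    (card_filter_mem_unitBox fun i => by linarith [hn i])
    (fun u v huv => two_mul_card_filter_mem_unitBox_le hn huv.ne) hS

theorem isKDependent_one_piFinset {A : ∀ i, Finset (ZMod (n i))}
    (i₀ : Fin d) (hsep : ∀ i ≠ i₀, ∀ x ∈ A i, ∀ y ∈ A i, WithinOne x y → x = y)
    (hpair : ∀ x ∈ A i₀, ∀ y ∈ A i₀, ∀ z ∈ A i₀,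
      y ≠ x → z ≠ x → WithinOne x y → WithinOne x z → y = z) :
    IsKDependent (torusGraph d n) 1 (Fintype.piFinset A : Set (∀ i, ZMod (n i))) := by
  intro v hv
  rw [Set.ncard_le_one (Set.toFinite _)]
  rintro u ⟨hu, hvu, hvu'⟩ w ⟨hw, hvw, hvw'⟩
  rw [mem_coe, Fintype.mem_piFinset] at hv hu hw
  have hoff {x : ∀ i, ZMod (n i)} (hx : ∀ i, x i ∈ A i) (hvx : ∀ i, WithinOne (v i) (x i))
      (i : Fin d) (hi : i ≠ i₀) : x i = v i :=
    (hsep i hi _ (hv i) _ (hx i) (hvx i)).symm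
  have hne {x : ∀ i, ZMod (n i)} (hx : ∀ i ≠ i₀, x i = v i) (hvx : v ≠ x) : x i₀ ≠ v i₀ :=
    fun h => hvx (funext fun i => by
      by_cases hi : i = i₀
      · subst hi; exact h.symm
      · exact (hx i hi).symm)
  have h₀ : u i₀ = w i₀ := hpair _ (hv i₀) _ (hu i₀) _ (hw i₀) (hne (hoff hu hvu') hvu)
    (hne (hoff hw hvw') hvw) (hvu' i₀) (hvw' i₀)
  funext i
  by_cases hi : i = i₀
  · subst hi; exact h₀
  · rw [hoff hu hvu' i hi, hoff hw hvw' i hi]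

end Torus

section Construction

variable {m q : ℕ}

def evenCells (m q : ℕ) : Finset (ZMod m) :=
  ((range (3 * q)).image (2 * ·)).image Nat.cast

/-- `⌊3k/2⌋` runs through `0, 1, 3, 4, 6, 7, …`, the residues `0, 1 (mod 3)` below `6q`. -/
def pairedCells (m q : ℕ) : Finset (ZMod m) :=
  ((range (4 * q)).image (3 * · / 2)).image Nat.cast

theorem card_evenCells (hq : 6 * q < m) : #(evenCells m q) = 3 * q := by
  rw [evenCells, card_image_natCast (by simp only [mem_image, mem_range]; omega),
    card_image_of_injective _ fun a b h => by simpa using h, card_range]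

theorem card_pairedCells (hq : 6 * q < m) : #(pairedCells m q) = 4 * q := by
  rw [pairedCells, card_image_natCast (by simp only [mem_image, mem_range]; omega),
    card_image_of_injective _ fun a b h => by omega, card_range]

theorem eq_of_withinOne_of_mem_evenCells (hq : 6 * q < m) {x y : ZMod m}
    (hx : x ∈ evenCells m q) (hy : y ∈ evenCells m q) (h : WithinOne x y) : x = y := by
  simp only [evenCells, mem_image, mem_range] at hx hy
  obtain ⟨_, ⟨k, hk, rfl⟩, rfl⟩ := hx
  obtain ⟨_, ⟨l, hl, rfl⟩, rfl⟩ := hy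
  have := withinOne_natCast (by omega) (by omega) h
  congr 1
  omega

theorem eq_of_withinOne_of_mem_pairedCells (hq : 6 * q < m) {x y z : ZMod m}
    (hx : x ∈ pairedCells m q) (hy : y ∈ pairedCells m q) (hz : z ∈ pairedCells m q)
    (hyx : y ≠ x) (hzx : z ≠ x) (hxy : WithinOne x y) (hxz : WithinOne x z) : y = z := by
  simp only [pairedCells, mem_image, mem_range] at hx hy hz
  obtain ⟨_, ⟨k, hk, rfl⟩, rfl⟩ := hx
  obtain ⟨_, ⟨l, hl, rfl⟩, rfl⟩ := hy
  obtain ⟨_, ⟨j, hj, rfl⟩, rfl⟩ := hz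
  have h1 := withinOne_natCast (by omega) (by omega) hxy
  have h2 := withinOne_natCast (by omega) (by omega) hxz
  have h3 : 3 * l / 2 ≠ 3 * k / 2 := fun h => hyx (by rw [h])
  have h4 : 3 * j / 2 ≠ 3 * k / 2 := fun h => hzx (by rw [h])
  congr 1
  rcases Nat.mod_two_eq_zero_or_one k with hk2 | hk2 <;> omega

end Construction

theorem four_mul_pow_le_three_mul_betaK_torusGraph {d : ℕ} (hd : 1 ≤ d) (m : ℕ) [NeZero m] :
    4 * (3 * ((m - 1) / 6)) ^ d ≤ 3 * betaK (torusGraph d fun _ => m) 1 := by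
  obtain ⟨e, rfl⟩ : ∃ e, d = e + 1 := ⟨d - 1, by omega⟩
  set q := (m - 1) / 6
  have hq : 6 * q < m := by have := NeZero.pos m; omega
  set A : Fin (e + 1) → Finset (ZMod m) := Fin.cons (pairedCells m q) fun _ => evenCells m q
  have hS : IsKDependent (torusGraph (e + 1) fun _ => m) 1 (Fintype.piFinset A : Set _) := by
    refine isKDependent_one_piFinset 0 (fun i hi => ?_) ?_
    · obtain ⟨j, rfl⟩ := Fin.exists_succ_eq.mpr hi
      exact fun x hx y hy => eq_of_withinOne_of_mem_evenCells hq hx hy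
    · exact fun x hx y hy z hz => eq_of_withinOne_of_mem_pairedCells hq hx hy hz
  have hcard : #(Fintype.piFinset A) = 4 * q * (3 * q) ^ e := by
    rw [Fintype.card_piFinset, Fin.prod_univ_succ]
    simp only [A, Fin.cons_zero, Fin.cons_succ, card_pairedCells hq, card_evenCells hq,
      Fin.prod_const]
  calc 4 * (3 * q) ^ (e + 1) = 3 * #(Fintype.piFinset A) := by rw [hcard]; ring
    _ ≤ 3 * betaK (torusGraph (e + 1) fun _ => m) 1 :=
      Nat.mul_le_mul_left 3 ((torusGraph _ _).card_le_betaK hS)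

theorem tendsto_natCast_three_mul_pred_div_six_div :
    Tendsto (fun m : ℕ => ((3 * ((m - 1) / 6) : ℕ) : ℝ) / m) atTop (𝓝 (1 / 2)) := by
  have hlower : Tendsto (fun m : ℕ => 1 / 2 - 7 / 2 * (m : ℝ)⁻¹) atTop (𝓝 (1 / 2)) := by
    simpa using (tendsto_inv_atTop_zero.comp tendsto_natCast_atTop_atTop).const_mul (7 / 2 : ℝ)
      |>.const_sub (1 / 2 : ℝ)
  have hbounds (m : ℕ) (hm : 1 ≤ m) :
      1 / 2 - 7 / 2 * (m : ℝ)⁻¹ ≤ ((3 * ((m - 1) / 6) : ℕ) : ℝ) / m ∧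
        ((3 * ((m - 1) / 6) : ℕ) : ℝ) / m ≤ 1 / 2 := by
    have hm' : (0 : ℝ) < m := by exact_mod_cast hm
    have h₁ : (m : ℝ) ≤ 6 * ((m - 1) / 6 : ℕ) + 7 := by exact_mod_cast (by omega)
    have h₂ : 6 * ((m - 1) / 6 : ℕ) ≤ (m : ℝ) := by exact_mod_cast (by omega)
    constructor
    · rw [le_div_iff₀ hm']
      field_simp
      push_cast
      linarith
    · rw [div_le_iff₀ hm']
      push_cast
      linarith
  exact tendsto_of_tendsto_of_tendsto_of_le_of_le' hlower tendsto_const_nhds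
    (eventually_atTop.2 ⟨1, fun m hm => (hbounds m hm).1⟩)
    (eventually_atTop.2 ⟨1, fun m hm => (hbounds m hm).2⟩)

/-- τ_1^(d) = 2^(2−d)/3 = 4/(3·2^d). -/
theorem stmt_17 (d : ℕ) (hd : 1 ≤ d) :
    Filter.Tendsto
      (fun n : ℕ => (betaK (torusGraph d (fun _ => n)) 1 : ℝ) / (n : ℝ) ^ d)
      Filter.atTop (nhds (4 / (3 * (2 : ℝ) ^ d))) := by
  have hlim : Tendsto (fun m : ℕ => 4 / 3 * (((3 * ((m - 1) / 6) : ℕ) : ℝ) / m) ^ d) atTop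
      (𝓝 (4 / (3 * 2 ^ d))) := by
    convert (tendsto_natCast_three_mul_pred_div_six_div.pow d).const_mul (4 / 3 : ℝ) using 2
    rw [one_div_pow]
    field_simp
  refine tendsto_of_tendsto_of_tendsto_of_le_of_le' hlim tendsto_const_nhds ?_ ?_
  · filter_upwards [eventually_ge_atTop 1] with m hm
    have : NeZero m := ⟨by omega⟩
    have h : (4 * (3 * ((m - 1) / 6 : ℕ)) ^ d : ℝ) ≤ 3 * betaK (torusGraph d fun _ => m) 1 := by
      exact_mod_cast four_mul_pow_le_three_mul_betaK_torusGraph hd m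
    rw [div_pow, ← mul_div_assoc, div_le_div_iff_of_pos_right (by positivity)]
    push_cast
    linarith
  · filter_upwards [eventually_ge_atTop 3] with m hm
    have h : (3 * 2 ^ d * betaK (torusGraph d fun _ => m) 1 : ℝ) ≤ 4 * m ^ d := by
      exact_mod_cast (Fin.prod_const d m ▸ three_mul_two_pow_mul_betaK_torusGraph_le fun _ => hm)
    rw [div_le_div_iff₀ (by positivity) (by positivity)]
    linarith
end

section
/- For all integers m, n ≥ 3, every 3-dependent set of vertices in the two-dimensional toroidal kings graph T[m,n] has cardinality at most mn/2. -/
open Filter Topology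

/-!
Discharging. Give every vertex the charge `4·[v ∈ S] - 2`; the total charge is `4|S| - 2mn`, so it
suffices to show it is nonpositive. We add to the charge of the centre of each `3 × 3` window the
differences `H(w + (0,1)) - H(w)` and `V(w + (1,0)) - V(w)` of two potentials `H`, `V` that depend
only on the occupancy of a `3 × 2` resp. `2 × 3` block at `w`; these differences sum to zero over
the torus. The explicit potentials below make the modified charge nonpositive for each of the 512
occupancy patterns of a window whose centre, when occupied, has at most three occupied neighbours.
-/

open Finset

theorem sum_le_card_mul_of_le_add_potential {G : Type*} [AddCommGroup G] [Fintype G]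
    (f g h : G → ℤ) (a b : G) (c : ℤ)
    (hloc : ∀ w, f w + (g (w + a) - g w) + (h (w + b) - h w) ≤ c) :
    ∑ w, f w ≤ Fintype.card G * c := by
  have telescope (t : G) (φ : G → ℤ) : ∑ w, (φ (w + t) - φ w) = 0 := by
    rw [sum_sub_distrib, sub_eq_zero]
    exact Fintype.sum_equiv (Equiv.addRight t) _ _ fun _ => rfl
  calc ∑ w, f w = ∑ w, (f w + (g (w + a) - g w) + (h (w + b) - h w)) := by
        simp only [sum_add_distrib, telescope, add_zero]
    _ ≤ ∑ _w : G, c := sum_le_sum fun w _ => hloc w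
    _ = Fintype.card G * c := by simp

namespace KingsTorus

def potentialTableH : List ℤ :=
  [0, 1, 2, 0, 0, 0, 0, -2, 0, -1, 0, 0, 1, 0, -1, 0,
   0, 0, 2, 0, 0, 0, 0, -2, 1, -1, 1, 0, 2, 0, 0, 0,
   2, 2, 3, 1, 2, 2, 3, 1, 2, 1, 2, 2, 1, 0, 0, 0,
   2, 2, 3, 1, 2, 2, 3, 1, 4, 2, 4, 3, 2, 0, 0, 0]

def potentialTableV : List ℤ :=
  [0, 0, -1, 1, 1, 1, -2, 0, 1, 1, 0, 2, 2, 2, -1, 1,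
   3, 4, 2, 2, 3, 3, 0, -1, 3, 4, 4, 3, 3, 3, 2, 0,
   0, 0, -3, -1, 0, 0, -2, 0, 0, 0, -1, 1, 0, 0, 0, 2,
   2, 3, 0, 0, 0, 0, 0, 0, 2, 3, 3, 0, 0, 0, 0, 0]

/-- The cells of a block are read row by row, the first cell being the least significant bit. -/
def binaryIndex (x₀ x₁ x₂ x₃ x₄ x₅ : Bool) : ℕ :=
  x₀.toNat + 2 * x₁.toNat + 4 * x₂.toNat + 8 * x₃.toNat + 16 * x₄.toNat + 32 * x₅.toNat

def potentialH (x₀ x₁ x₂ x₃ x₄ x₅ : Bool) : ℤ :=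
  potentialTableH.getD (binaryIndex x₀ x₁ x₂ x₃ x₄ x₅) 0

def potentialV (x₀ x₁ x₂ x₃ x₄ x₅ : Bool) : ℤ :=
  potentialTableV.getD (binaryIndex x₀ x₁ x₂ x₃ x₄ x₅) 0

theorem discharge_certificate : ∀ b₀₀ b₀₁ b₀₂ b₁₀ b₁₁ b₁₂ b₂₀ b₂₁ b₂₂ : Bool,
    (b₁₁ = true → b₀₀.toInt + b₀₁.toInt + b₀₂.toInt + b₁₀.toInt + b₁₁.toInt + b₁₂.toInt
      + b₂₀.toInt + b₂₁.toInt + b₂₂.toInt ≤ 4) →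
    4 * b₁₁.toInt
      + (potentialH b₀₁ b₀₂ b₁₁ b₁₂ b₂₁ b₂₂ - potentialH b₀₀ b₀₁ b₁₀ b₁₁ b₂₀ b₂₁)
      + (potentialV b₁₀ b₁₁ b₁₂ b₂₀ b₂₁ b₂₂ - potentialV b₀₀ b₀₁ b₀₂ b₁₀ b₁₁ b₁₂) ≤ 2 := by
  decide

abbrev Torus (m n : ℕ) := ∀ i : Fin 2, ZMod (![m, n] i)

variable {m n : ℕ}

instance neZero_dims [NeZero m] [NeZero n] (i : Fin 2) : NeZero (![m, n] i) := by
  fin_cases i <;> assumption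

theorem card_torus [NeZero m] [NeZero n] : Fintype.card (Torus m n) = m * n := by
  simp [Fintype.card_pi, ZMod.card]

def shift (a b : ℕ) : Torus m n := Fin.cons (a : ZMod m) (Fin.cons (b : ZMod n) finZeroElim)

@[simp] theorem shift_zero (a b : ℕ) : (shift a b : Torus m n) 0 = (a : ZMod (![m, n] 0)) := rfl
@[simp] theorem shift_one (a b : ℕ) : (shift a b : Torus m n) 1 = (b : ZMod (![m, n] 1)) := rfl

theorem shift_add_shift (a b c d : ℕ) :
    (shift a b + shift c d : Torus m n) = shift (a + c) (b + d) := by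
  funext i; fin_cases i
  exacts [(Nat.cast_add a c).symm, (Nat.cast_add b d).symm]

theorem shift_injective (hm : 3 ≤ m) (hn : 3 ≤ n) {a b c d : Fin 3}
    (h : (shift a b : Torus m n) = shift c d) : a = c ∧ b = d := by
  have h0 := congrArg ZMod.val (congrFun h 0)
  have h1 := congrArg ZMod.val (congrFun h 1)
  simp only [shift_zero, shift_one] at h0 h1
  rw [ZMod.val_cast_of_lt (show (a : ℕ) < ![m, n] 0 by simp; omega),
    ZMod.val_cast_of_lt (show (c : ℕ) < ![m, n] 0 by simp; omega)] at h0
  rw [ZMod.val_cast_of_lt (show (b : ℕ) < ![m, n] 1 by simp; omega),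
    ZMod.val_cast_of_lt (show (d : ℕ) < ![m, n] 1 by simp; omega)] at h1
  exact ⟨Fin.ext h0, Fin.ext h1⟩

theorem add_natCast_sub_add_one {k : ℕ} (x : ZMod k) (a : Fin 3) :
    x + a - (x + 1) = -1 ∨ x + a - (x + 1) = 0 ∨ x + a - (x + 1) = 1 := by
  fin_cases a <;> norm_num

theorem adj_add_shift (w : Torus m n) {a b : Fin 3}
    (hne : (w + shift 1 1 : Torus m n) ≠ w + shift a b) :
    (torusGraph 2 ![m, n]).Adj (w + shift 1 1) (w + shift a b) := by
  refine ⟨hne, Fin.forall_fin_two.2 ⟨?_, ?_⟩⟩ <;>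
    simpa only [Pi.add_apply, shift_zero, shift_one, Nat.cast_one]
      using add_natCast_sub_add_one _ _

open scoped Classical in
noncomputable def occupied (S : Set (Torus m n)) (w : Torus m n) (a b : ℕ) : Bool :=
  decide (w + shift a b ∈ S)

theorem occupied_add_shift (S : Set (Torus m n)) (w : Torus m n) (a b c d : ℕ) :
    occupied S (w + shift a b) c d = occupied S w (a + c) (b + d) := by
  rw [occupied, occupied, add_assoc, shift_add_shift]

theorem sum_occupied_le_four (hm : 3 ≤ m) (hn : 3 ≤ n) {S : Set (Torus m n)}
    (hS : IsKDependent (torusGraph 2 ![m, n]) 3 S) (w : Torus m n) (hw : w + shift 1 1 ∈ S) :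
    ∑ p : Fin 3 × Fin 3, (occupied S w p.1 p.2).toInt ≤ 4 := by
  classical
  have : NeZero m := ⟨by omega⟩
  have : NeZero n := ⟨by omega⟩
  set cell : Fin 3 × Fin 3 → Torus m n := fun p => w + shift p.1 p.2
  have cell_injective : cell.Injective := fun p q h => by
    obtain ⟨h1, h2⟩ := shift_injective hm hn (add_left_cancel h)
    exact Prod.ext h1 h2
  have hsub : ↑((univ.filter fun p => cell p ∈ S).image cell) ⊆
      insert (w + shift 1 1) (S ∩ (torusGraph 2 ![m, n]).neighborSet (w + shift 1 1)) := by
    intro v hv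
    obtain ⟨p, hp, rfl⟩ := mem_image.1 (mem_coe.1 hv)
    by_cases hc : w + shift 1 1 = cell p
    · exact Or.inl hc.symm
    · exact Or.inr ⟨(mem_filter.1 hp).2, adj_add_shift w hc⟩
  calc ∑ p : Fin 3 × Fin 3, (occupied S w p.1 p.2).toInt
      = #(univ.filter fun p => cell p ∈ S) := by
        rw [← sum_boole]; congr 1; ext p; by_cases h : cell p ∈ S <;> simp [occupied, cell, h]
    _ = ((univ.filter fun p => cell p ∈ S).image cell : Set (Torus m n)).ncard := by
        rw [Set.ncard_coe_finset, card_image_of_injective _ cell_injective]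
    _ ≤ (S ∩ (torusGraph 2 ![m, n]).neighborSet (w + shift 1 1)).ncard + 1 := by
        exact_mod_cast (Set.ncard_le_ncard hsub (Set.toFinite _)).trans (Set.ncard_insert_le _ _)
    _ ≤ 4 := by have := hS _ hw; omega

theorem sum_occupied_eq_ncard [NeZero m] [NeZero n] (S : Set (Torus m n)) (a b : ℕ) :
    ∑ w, (occupied S w a b).toInt = S.ncard := by
  classical
  rw [Fintype.sum_equiv (Equiv.addRight (shift a b)) (fun w => (occupied S w a b).toInt)
    (fun v => (decide (v ∈ S)).toInt) fun _ => rfl]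
  rw [Set.ncard_eq_toFinset_card', ← Set.filter_mem_univ_eq_toFinset, ← sum_boole]
  congr 1; ext v; by_cases h : v ∈ S <;> simp [h]

noncomputable def potentialHAt (S : Set (Torus m n)) (w : Torus m n) : ℤ :=
  potentialH (occupied S w 0 0) (occupied S w 0 1) (occupied S w 1 0) (occupied S w 1 1)
    (occupied S w 2 0) (occupied S w 2 1)

noncomputable def potentialVAt (S : Set (Torus m n)) (w : Torus m n) : ℤ :=
  potentialV (occupied S w 0 0) (occupied S w 0 1) (occupied S w 0 2) (occupied S w 1 0)
    (occupied S w 1 1) (occupied S w 1 2)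

theorem local_discharge (hm : 3 ≤ m) (hn : 3 ≤ n) {S : Set (Torus m n)}
    (hS : IsKDependent (torusGraph 2 ![m, n]) 3 S) (w : Torus m n) :
    4 * (occupied S w 1 1).toInt + (potentialHAt S (w + shift 0 1) - potentialHAt S w)
      + (potentialVAt S (w + shift 1 0) - potentialVAt S w) ≤ 2 := by
  simp only [potentialHAt, potentialVAt, occupied_add_shift, Nat.reduceAdd, zero_add, add_zero]
  apply discharge_certificate
  intro hcentre
  have hw : w + shift 1 1 ∈ S := by simpa [occupied] using hcentre
  simpa [Fintype.sum_prod_type, Fin.sum_univ_three, add_assoc] using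
    sum_occupied_le_four hm hn hS w hw

end KingsTorus

/-- every 3-dependent set in T[m,n] has at most mn/2 vertices. -/
theorem stmt_18 (m n : ℕ) (hm : 3 ≤ m) (hn : 3 ≤ n)
    (S : Set (∀ i : Fin 2, ZMod (![m, n] i)))
    (hS : IsKDependent (torusGraph 2 ![m, n]) 3 S) :
    (S.ncard : ℝ) ≤ (m : ℝ) * (n : ℝ) / 2 := by
  have : NeZero m := ⟨by omega⟩
  have : NeZero n := ⟨by omega⟩
  have hsum := sum_le_card_mul_of_le_add_potential
    (fun w => 4 * (KingsTorus.occupied S w 1 1).toInt) (KingsTorus.potentialHAt S)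
    (KingsTorus.potentialVAt S) (KingsTorus.shift 0 1) (KingsTorus.shift 1 0) 2
    (KingsTorus.local_discharge hm hn hS)
  rw [← mul_sum, KingsTorus.sum_occupied_eq_ncard, KingsTorus.card_torus] at hsum
  have : (4 * S.ncard : ℝ) ≤ (m * n : ℕ) * 2 := by exact_mod_cast hsum
  push_cast at this
  linarith
end
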